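/- arXiv:1506.02006 — 3 statements merged into one kernel-verified Lean document; each statement's English description precedes it below -/
import Mathlib

section
/- Let Ξ ⊆ A^{ℤ²} be a subshift whose shift action is minimal and uniquely ergodic, and suppose Ξ admits a horizontal shear. If λ = (λ₁, λ₂) ∈ ℝ² is a topological eigenvalue of the shift action on Ξ, then λ₁ ∈ ℤ. -/
/-!
Continuous eigenfunctions cannot separate proximal configurations: if `φ^{s_k} v` and
`φ^{s_k} w` agree on ever larger windows, then `‖ψ v - ψ w‖ = ‖ψ (φ^{s_k} v) - ψ (φ^{s_k} w)‖`
is the value of a continuous function at a cluster point of the pairs, which lies on the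
diagonal by compactness, so it vanishes. Shifting a sheared configuration `v` upwards makes it
proximal to `u`, shifting it downwards makes it proximal to `φ^{(1,0)} u`. Hence
`ψ u = ψ (φ^{(1,0)} u) = exp (2πiλ₁) ψ u`, and `λ₁ ∈ ℤ`.
-/

open MeasureTheory

/-- The shift `ℤ²`-action on the full shift `A^{ℤ²}`: `(φⁿ u)(m) = u(m+n)`. -/
def shift2 {A : Type*} (n : ℤ × ℤ) (u : ℤ × ℤ → A) : ℤ × ℤ → A := fun m => u (m + n)

section Defs

variable {A : Type*} [TopologicalSpace A]

/-- A subshift: a nonempty, closed, shift-invariant subset of the full shift. -/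
def IsSubshift (Ξ : Set (ℤ × ℤ → A)) : Prop :=
  Ξ.Nonempty ∧ IsClosed Ξ ∧ ∀ (n : ℤ × ℤ), ∀ u ∈ Ξ, shift2 n u ∈ Ξ

/-- Minimality: every orbit is dense in the subshift. -/
def IsMinimalSubshift (Ξ : Set (ℤ × ℤ → A)) : Prop :=
  ∀ u ∈ Ξ, Ξ ⊆ closure {v | ∃ n : ℤ × ℤ, v = shift2 n u}

/-- Freeness: the shift action is free on the subshift. -/
def IsFreeSubshift (Ξ : Set (ℤ × ℤ → A)) : Prop :=
  ∀ u ∈ Ξ, ∀ n : ℤ × ℤ, shift2 n u = u → n = 0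

/-- A continuous `ℤ`-valued cocycle on the subshift `Ξ`: continuous in the first
variable, and satisfying `θ(u, n+m) = θ(u, n) + θ(φⁿ u, m)` on `Ξ`. -/
def IsContinuousCocycle (Ξ : Set (ℤ × ℤ → A)) (θ : (ℤ × ℤ → A) → ℤ × ℤ → ℤ) : Prop :=
  (∀ n : ℤ × ℤ, ContinuousOn (fun u => θ u n) Ξ) ∧
  (∀ u ∈ Ξ, ∀ n m : ℤ × ℤ, θ u (n + m) = θ u n + θ (shift2 n u) m)

variable [MeasurableSpace A]

/-- A shift-invariant Borel probability measure on the subshift `Ξ`, encoded as a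
probability measure on the full shift giving `Ξ` full measure. -/
def IsInvariantProb (Ξ : Set (ℤ × ℤ → A)) (μ : Measure (ℤ × ℤ → A)) : Prop :=
  IsProbabilityMeasure μ ∧ μ Ξᶜ = 0 ∧ ∀ n : ℤ × ℤ, μ.map (shift2 n) = μ

end Defs

/-- Horizontal shear: there are `u ∈ Ξ` and `N, N' : ℤ` such that for every `n : ℤ`
there is `v ∈ Ξ` agreeing with `u` on `ℤ × N₊` and with `φ^{(n,0)} u` on `ℤ × N'₋`. -/
def AdmitsHorizontalShear {A : Type*} [TopologicalSpace A] (Ξ : Set (ℤ × ℤ → A)) : Prop :=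
  ∃ u ∈ Ξ, ∃ N N' : ℤ, ∀ n : ℤ, ∃ v ∈ Ξ,
    (∀ m : ℤ × ℤ, N < m.2 → v m = u m) ∧
    (∀ m : ℤ × ℤ, m.2 < N' → v m = shift2 (n, 0) u m)

/-- Vertical shear: there are `u ∈ Ξ` and `N, N' : ℤ` such that for every `n : ℤ`
there is `v ∈ Ξ` agreeing with `u` on `N₊ × ℤ` and with `φ^{(0,n)} u` on `N'₋ × ℤ`. -/
def AdmitsVerticalShear {A : Type*} [TopologicalSpace A] (Ξ : Set (ℤ × ℤ → A)) : Prop :=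
  ∃ u ∈ Ξ, ∃ N N' : ℤ, ∀ n : ℤ, ∃ v ∈ Ξ,
    (∀ m : ℤ × ℤ, N < m.1 → v m = u m) ∧
    (∀ m : ℤ × ℤ, m.1 < N' → v m = shift2 (0, n) u m)

/-- `λ = (λ₁, λ₂) ∈ ℝ²` is a topological eigenvalue of the shift action on `Ξ`:
there is a continuous `ψ : Ξ → ℂ` of modulus one with
`ψ(φⁿ u) = exp(2πi (λ₁ n₁ + λ₂ n₂)) ψ(u)`. -/
def IsTopologicalEigenvalue {A : Type*} [TopologicalSpace A] (Ξ : Set (ℤ × ℤ → A))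
    (lam : ℝ × ℝ) : Prop :=
  ∃ ψ : (ℤ × ℤ → A) → ℂ, ContinuousOn ψ Ξ ∧ (∀ u ∈ Ξ, ‖ψ u‖ = 1) ∧
    ∀ u ∈ Ξ, ∀ n : ℤ × ℤ,
      ψ (shift2 n u) =
        Complex.exp (2 * Real.pi * Complex.I *
          ((lam.1 * (n.1 : ℝ) + lam.2 * (n.2 : ℝ) : ℝ) : ℂ)) * ψ u

open Filter Topology

lemma IsCompact.exists_mapClusterPt_eq_of_eventually_eq {X Y α : Type*} [TopologicalSpace X]
    [TopologicalSpace Y] [T1Space Y] {K : Set X} (hK : IsCompact K) {g : X → Y}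
    (hg : ContinuousOn g K) {l : Filter α} [l.NeBot] {z : α → X} (hzK : ∀ᶠ k in l, z k ∈ K)
    {c : Y} (hc : ∀ᶠ k in l, g (z k) = c) :
    ∃ p ∈ K, MapClusterPt p l z ∧ g p = c := by
  have hmap : map z l ≤ 𝓟 K := tendsto_principal.2 hzK
  obtain ⟨p, hpK, hp⟩ := hK.exists_mapClusterPt hmap
  have hgp : MapClusterPt (g p) l (g ∘ z) :=
    hp.tendsto_comp' ((hg p hpK).mono_left (inf_le_inf_left _ hmap))
  exact ⟨p, hpK, hp, isClosed_singleton.mem_of_mapClusterPt hgp hc⟩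

lemma MapClusterPt.fst_eq_snd_of_eventually_eq_apply {ι α : Type*} {A : ι → Type*}
    [∀ i, TopologicalSpace (A i)] [∀ i, T2Space (A i)] {l : Filter α} {x y : α → ∀ i, A i}
    {p q : ∀ i, A i} (hpq : MapClusterPt (p, q) l fun k => (x k, y k))
    (hxy : ∀ i, ∀ᶠ k in l, x k i = y k i) : p = q := by
  funext i
  have hi : MapClusterPt (p i, q i) l fun k => (x k i, y k i) :=
    hpq.continuousAt_comp (f := fun z : (∀ i, A i) × (∀ i, A i) => (z.1 i, z.2 i))
      (by fun_prop)
  exact isClosed_diagonal.mem_of_mapClusterPt hi (hxy i)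

lemma Complex.exists_int_eq_of_exp_two_pi_mul_I_mul_eq_one {r : ℝ}
    (h : Complex.exp (2 * Real.pi * Complex.I * r) = 1) : ∃ k : ℤ, r = k := by
  obtain ⟨k, hk⟩ := Complex.exp_eq_one_iff.1 h
  refine ⟨k, Complex.ofReal_injective ?_⟩
  have h2piI : 2 * (Real.pi : ℂ) * Complex.I ≠ 0 := by simp [Real.pi_ne_zero]
  simpa using mul_left_cancel₀ h2piI (hk.trans (mul_comm _ _))

lemma Complex.norm_exp_two_pi_mul_I_mul (r : ℝ) :
    ‖Complex.exp (2 * Real.pi * Complex.I * r)‖ = 1 := by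
  simp [Complex.norm_exp]

def IsEigenfunction {A : Type*} [TopologicalSpace A] (Ξ : Set (ℤ × ℤ → A)) (lam : ℝ × ℝ)
    (ψ : (ℤ × ℤ → A) → ℂ) : Prop :=
  ContinuousOn ψ Ξ ∧ (∀ u ∈ Ξ, ‖ψ u‖ = 1) ∧
    ∀ u ∈ Ξ, ∀ n : ℤ × ℤ,
      ψ (shift2 n u) =
        Complex.exp (2 * Real.pi * Complex.I *
          ((lam.1 * (n.1 : ℝ) + lam.2 * (n.2 : ℝ) : ℝ) : ℂ)) * ψ u

lemma isTopologicalEigenvalue_iff {A : Type*} [TopologicalSpace A] {Ξ : Set (ℤ × ℤ → A)}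
    {lam : ℝ × ℝ} : IsTopologicalEigenvalue Ξ lam ↔ ∃ ψ, IsEigenfunction Ξ lam ψ :=
  Iff.rfl

namespace IsEigenfunction

variable {A : Type*} [TopologicalSpace A] {Ξ : Set (ℤ × ℤ → A)} {lam : ℝ × ℝ}
  {ψ : (ℤ × ℤ → A) → ℂ}

lemma dist_apply_shift2 (hψ : IsEigenfunction Ξ lam ψ) {v w : ℤ × ℤ → A} (hv : v ∈ Ξ)
    (hw : w ∈ Ξ) (n : ℤ × ℤ) : dist (ψ (shift2 n v)) (ψ (shift2 n w)) = dist (ψ v) (ψ w) := by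
  rw [dist_eq_norm, dist_eq_norm, hψ.2.2 v hv, hψ.2.2 w hw, ← mul_sub, norm_mul,
    Complex.norm_exp_two_pi_mul_I_mul, one_mul]

lemma eq_of_proximal [T2Space A] (hψ : IsEigenfunction Ξ lam ψ) (hK : IsCompact Ξ)
    (hinv : ∀ n : ℤ × ℤ, ∀ u ∈ Ξ, shift2 n u ∈ Ξ) {v w : ℤ × ℤ → A} (hv : v ∈ Ξ) (hw : w ∈ Ξ)
    {α : Type*} {l : Filter α} [l.NeBot] (s : α → ℤ × ℤ)
    (hvw : ∀ m, ∀ᶠ k in l, v (m + s k) = w (m + s k)) : ψ v = ψ w := by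
  have hg : ContinuousOn (fun z : (ℤ × ℤ → A) × (ℤ × ℤ → A) => dist (ψ z.1) (ψ z.2))
      (Ξ ×ˢ Ξ) :=
    continuous_dist.comp_continuousOn ((hψ.1.comp continuousOn_fst Set.mapsTo_fst_prod).prodMk
      (hψ.1.comp continuousOn_snd Set.mapsTo_snd_prod))
  obtain ⟨⟨p, q⟩, -, hpq, hdist⟩ := (hK.prod hK).exists_mapClusterPt_eq_of_eventually_eq hg
    (l := l) (z := fun k => (shift2 (s k) v, shift2 (s k) w))
    (Eventually.of_forall fun k => ⟨hinv _ v hv, hinv _ w hw⟩)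
    (Eventually.of_forall fun k => hψ.dist_apply_shift2 hv hw (s k))
  rw [hpq.fst_eq_snd_of_eventually_eq_apply hvw, dist_self] at hdist
  exact dist_eq_zero.1 hdist.symm

lemma exists_int_eq_fst (hψ : IsEigenfunction Ξ lam ψ) {u : ℤ × ℤ → A} (hu : u ∈ Ξ)
    (h : ψ (shift2 (1, 0) u) = ψ u) : ∃ k : ℤ, lam.1 = k := by
  have hψu : ψ u ≠ 0 := norm_ne_zero_iff.1 (by rw [hψ.2.1 u hu]; exact one_ne_zero)
  rw [hψ.2.2 u hu, mul_eq_right₀ hψu] at h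
  exact Complex.exists_int_eq_of_exp_two_pi_mul_I_mul_eq_one (by simpa using h)

end IsEigenfunction

theorem statement4_general {A : Type} [Fintype A]
    [TopologicalSpace A] [DiscreteTopology A]
    (Ξ : Set (ℤ × ℤ → A)) (hsub : IsSubshift Ξ)
    (hshear : AdmitsHorizontalShear Ξ)
    (lam : ℝ × ℝ) (heig : IsTopologicalEigenvalue Ξ lam) :
    ∃ k : ℤ, lam.1 = (k : ℝ) := by
  obtain ⟨ψ, hψ⟩ := isTopologicalEigenvalue_iff.1 heig
  obtain ⟨-, hclosed, hinv⟩ := hsub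
  obtain ⟨u, hu, N, N', hshear⟩ := hshear
  obtain ⟨v, hv, hv_above, hv_below⟩ := hshear 1
  have hK : IsCompact Ξ := hclosed.isCompact
  have hvu : ψ v = ψ u :=
    hψ.eq_of_proximal hK hinv hv hu (l := atTop) (fun k : ℤ => (0, k)) fun m =>
      eventually_atTop.2 ⟨N - m.2 + 1, fun k hk => hv_above _ (by rw [Prod.snd_add]; omega)⟩
  have hv_shift : ψ v = ψ (shift2 (1, 0) u) :=
    hψ.eq_of_proximal hK hinv hv (hinv _ u hu) (l := atBot) (fun k : ℤ => (0, k)) fun m =>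
      eventually_atBot.2 ⟨N' - m.2 - 1, fun k hk => hv_below _ (by rw [Prod.snd_add]; omega)⟩
  exact hψ.exists_int_eq_fst hu (hv_shift.symm.trans hvu)

/-- In a minimal, uniquely ergodic `ℤ²` subshift admitting a horizontal shear, the first
component of every topological eigenvalue is an integer. -/
theorem statement4 {A : Type} [Fintype A] [Nonempty A]
    [TopologicalSpace A] [DiscreteTopology A] [MeasurableSpace A] [BorelSpace A]
    (Ξ : Set (ℤ × ℤ → A)) (hsub : IsSubshift Ξ) (hmin : IsMinimalSubshift Ξ)
    (huerg : ∃! μ : Measure (ℤ × ℤ → A), IsInvariantProb Ξ μ)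
    (hshear : AdmitsHorizontalShear Ξ)
    (lam : ℝ × ℝ) (heig : IsTopologicalEigenvalue Ξ lam) :
    ∃ k : ℤ, lam.1 = (k : ℝ) :=
  statement4_general Ξ hsub hshear lam heig
end

section
/- Let Ξ ⊆ A^{ℤ²} be a subshift whose shift action is minimal and uniquely ergodic, and suppose Ξ admits a vertical shear. If λ = (λ₁, λ₂) ∈ ℝ² is a topological eigenvalue of the shift action on Ξ, then λ₂ ∈ ℤ. -/
open MeasureTheory

/-!
A continuous eigenfunction `ψ` takes the same value at two configurations that agree on a
half-plane `{m | N < m.1}` (or `{m | m.1 < N'}`): translating both far into that half-plane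
changes `ψ` at both by the same unimodular factor, while by compactness of `Ξ` the two
translates become arbitrarily close. Applied to the shear configuration `v`, which agrees with
`u` on the right and with `φ^{(0,1)} u` on the left, this gives
`ψ u = ψ v = ψ (φ^{(0,1)} u) = exp(2πiλ₂) ψ u`, and `ψ u ≠ 0`.
-/

open Filter Complex

section CompactPi

variable {ι A α : Type*} [TopologicalSpace A]

lemma fst_eq_snd_of_mapClusterPt [T2Space A] {l : Filter α} {x y : α → ι → A}
    {p : (ι → A) × (ι → A)} (hp : MapClusterPt p l fun k => (x k, y k))
    (hxy : ∀ i, ∀ᶠ k in l, x k i = y k i) : p.1 = p.2 :=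
  funext fun i => (isClosed_eq (by fun_prop) (by fun_prop) :
    IsClosed {q : (ι → A) × (ι → A) | q.1 i = q.2 i}).mem_of_mapClusterPt hp (hxy i)

lemma eq_zero_of_dist_eq_of_eventually_eq [CompactSpace A] [T2Space A] {E : Type*}
    [PseudoMetricSpace E] {Ξ : Set (ι → A)} (hΞ : IsClosed Ξ) {ψ : (ι → A) → E}
    (hψ : ContinuousOn ψ Ξ) {l : Filter α} [l.NeBot] {x y : α → ι → A}
    (hx : ∀ k, x k ∈ Ξ) (hy : ∀ k, y k ∈ Ξ) (hxy : ∀ i, ∀ᶠ k in l, x k i = y k i) {c : ℝ}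
    (hc : ∀ k, dist (ψ (x k)) (ψ (y k)) = c) : c = 0 := by
  have hψ₁ : ContinuousOn (fun q : (ι → A) × (ι → A) => ψ q.1) (Ξ ×ˢ Ξ) :=
    hψ.comp continuousOn_fst fun _ hq => hq.1
  have hψ₂ : ContinuousOn (fun q : (ι → A) × (ι → A) => ψ q.2) (Ξ ×ˢ Ξ) :=
    hψ.comp continuousOn_snd fun _ hq => hq.2
  have hdist : ContinuousOn (fun q : (ι → A) × (ι → A) => dist (ψ q.1) (ψ q.2)) (Ξ ×ˢ Ξ) :=
    continuous_dist.comp_continuousOn (hψ₁.prodMk hψ₂)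
  have hK : IsCompact (Ξ ×ˢ Ξ ∩ (fun q => dist (ψ q.1) (ψ q.2)) ⁻¹' {c}) :=
    (hdist.preimage_isClosed_of_isClosed (hΞ.prod hΞ) isClosed_singleton).isCompact
  obtain ⟨p, ⟨-, hpc⟩, hp⟩ := hK.exists_mapClusterPt_of_frequently (f := fun k => (x k, y k))
    (Frequently.of_forall (f := l) fun k => ⟨⟨hx k, hy k⟩, hc k⟩)
  rw [Set.mem_preimage, fst_eq_snd_of_mapClusterPt hp hxy, dist_self] at hpc
  exact (Set.mem_singleton_iff.1 hpc).symm

end CompactPi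

lemma norm_exp_two_pi_I_mul_ofReal (r : ℝ) : ‖exp (2 * Real.pi * I * (r : ℂ))‖ = 1 := by
  rw [show 2 * Real.pi * I * (r : ℂ) = ((2 * Real.pi * r : ℝ) : ℂ) * I by push_cast; ring]
  exact norm_exp_ofReal_mul_I _

lemma exists_int_eq_of_exp_two_pi_I_mul_eq_one {r : ℝ}
    (h : exp (2 * Real.pi * I * (r : ℂ)) = 1) :
    ∃ k : ℤ, r = k := by
  obtain ⟨k, hk⟩ := exp_eq_one_iff.1 h
  refine ⟨k, ?_⟩
  have h2πI : 2 * (Real.pi : ℂ) * I ≠ 0 := by simp [Real.pi_ne_zero, I_ne_zero]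
  exact_mod_cast mul_left_cancel₀ h2πI (hk.trans (mul_comm _ _))

section Eigenfunction

variable {A α : Type*} [TopologicalSpace A] [CompactSpace A] [T2Space A]
  {Ξ : Set (ℤ × ℤ → A)} {lam : ℝ × ℝ} {ψ : (ℤ × ℤ → A) → ℂ}

lemma eigenfunction_eq_of_eventually_eq (hΞ : IsClosed Ξ)
    (hinv : ∀ n, ∀ u ∈ Ξ, shift2 n u ∈ Ξ) (hψc : ContinuousOn ψ Ξ)
    (hψe : ∀ u ∈ Ξ, ∀ n : ℤ × ℤ, ψ (shift2 n u) =
      exp (2 * Real.pi * I * ((lam.1 * (n.1 : ℝ) + lam.2 * (n.2 : ℝ) : ℝ) : ℂ)) * ψ u)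
    {v w : ℤ × ℤ → A} (hv : v ∈ Ξ) (hw : w ∈ Ξ) {l : Filter α} [l.NeBot] (n : α → ℤ × ℤ)
    (hvw : ∀ m, ∀ᶠ k in l, v (m + n k) = w (m + n k)) : ψ v = ψ w := by
  refine dist_eq_zero.1 (eq_zero_of_dist_eq_of_eventually_eq hΞ hψc (fun k => hinv (n k) v hv)
    (fun k => hinv (n k) w hw) hvw (c := dist (ψ v) (ψ w)) fun k => ?_)
  rw [hψe v hv, hψe w hw, dist_eq_norm, dist_eq_norm, ← mul_sub, norm_mul,
    norm_exp_two_pi_I_mul_ofReal, one_mul]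

end Eigenfunction

theorem statement5_general {A : Type} [Fintype A]
    [TopologicalSpace A] [DiscreteTopology A]
    (Ξ : Set (ℤ × ℤ → A)) (hsub : IsSubshift Ξ)
    (hshear : AdmitsVerticalShear Ξ)
    (lam : ℝ × ℝ) (heig : IsTopologicalEigenvalue Ξ lam) :
    ∃ k : ℤ, lam.2 = (k : ℝ) := by
  obtain ⟨-, hΞ, hinv⟩ := hsub
  obtain ⟨ψ, hψc, hψ1, hψe⟩ := heig
  obtain ⟨u, hu, N, N', hshear⟩ := hshear
  obtain ⟨v, hv, hright, hleft⟩ := hshear 1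
  have hvu : ψ v = ψ u :=
    eigenfunction_eq_of_eventually_eq hΞ hinv hψc hψe hv hu (l := atTop) (fun k : ℤ => (k, 0))
      fun m => (eventually_gt_atTop (N - m.1)).mono fun k hk =>
        hright _ (by simp only [Prod.fst_add]; omega)
  have hv_shift : ψ v = ψ (shift2 (0, 1) u) :=
    eigenfunction_eq_of_eventually_eq hΞ hinv hψc hψe hv (hinv _ u hu) (l := atBot)
      (fun k : ℤ => (k, 0)) fun m => (eventually_lt_atBot (N' - m.1)).mono fun k hk =>
        hleft _ (by simp only [Prod.fst_add]; omega)
  have hψu : ψ u ≠ 0 := fun h => by simpa [h] using hψ1 u hu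
  refine exists_int_eq_of_exp_two_pi_I_mul_eq_one (mul_right_cancel₀ hψu ?_)
  simpa [← hvu, hv_shift] using (hψe u hu (0, 1)).symm

/-- In a minimal, uniquely ergodic `ℤ²` subshift admitting a vertical shear, the second
component of every topological eigenvalue is an integer. -/
theorem statement5 {A : Type} [Fintype A] [Nonempty A]
    [TopologicalSpace A] [DiscreteTopology A] [MeasurableSpace A] [BorelSpace A]
    (Ξ : Set (ℤ × ℤ → A)) (hsub : IsSubshift Ξ) (hmin : IsMinimalSubshift Ξ)
    (huerg : ∃! μ : Measure (ℤ × ℤ → A), IsInvariantProb Ξ μ)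
    (hshear : AdmitsVerticalShear Ξ)
    (lam : ℝ × ℝ) (heig : IsTopologicalEigenvalue Ξ lam) :
    ∃ k : ℤ, lam.2 = (k : ℝ) :=
  statement5_general Ξ hsub hshear lam heig
end

section
/- Let C be a compact metrizable totally disconnected topological space, equipped with a metric d inducing its topology, and let φ be a continuous action of ℤ^k on C that is expansive: there exists ε > 0 such that for all distinct χ, ρ ∈ C there is n ∈ ℤ^k with d(φⁿ χ, φⁿ ρ) ≥ ε. Then there exist a finite nonempty alphabet A and a map h : C → A^{ℤ^k} such that h is a homeomorphism onto its image, the image h(C) is a closed shift-invariant subset of A^{ℤ^k}, and h intertwines the actions: h(φⁿ χ) = σⁿ(h(χ)) for all χ ∈ C and n ∈ ℤ^k, where σ is the shift action (σⁿ u)(m) = u(m+n). In other words, every expansive ℤ^k action on C is topologically conjugate to a subshift. -/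
/-- Every expansive continuous `ℤ^k`-action on a compact metrizable totally disconnected
space is topologically conjugate to a subshift over some finite alphabet: there is a map
`h` into a full shift that is a homeomorphism onto its image, whose image is a closed
shift-invariant set, intertwining the action with the shift. -/
theorem statement11 {C : Type*} [MetricSpace C] [CompactSpace C]
    [TotallyDisconnectedSpace C]
    {k : ℕ}
    (φ : (Fin k → ℤ) → C → C)
    (hcont : ∀ n, Continuous (φ n))
    (hid : φ 0 = id)
    (hcomp : ∀ n m, φ (n + m) = φ n ∘ φ m)
    (hexp : ∃ ε > (0 : ℝ), ∀ χ ρ : C, χ ≠ ρ → ∃ n, ε ≤ dist (φ n χ) (φ n ρ)) :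
    ∃ (A : Type) (_ : Fintype A) (_ : Nonempty A),
      letI : TopologicalSpace A := ⊥
      ∃ h : C → ((Fin k → ℤ) → A),
        Topology.IsEmbedding h ∧
        IsClosed (Set.range h) ∧
        (∀ u ∈ Set.range h, ∀ n : Fin k → ℤ,
          (fun m => u (m + n)) ∈ Set.range h) ∧
        (∀ χ n, h (φ n χ) = fun m => h χ (m + n)) := by
  classical
  obtain ⟨ε, εpos, hε⟩ := hexp
  by_cases hC : Nonempty C
  case neg =>
    -- C is empty: trivial conjugacy to subshift over one letter
    refine ⟨Unit, inferInstance, inferInstance, fun _ _ => (), ?_, ?_, ?_, ?_⟩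
    · letI : TopologicalSpace Unit := ⊥
      haveI : DiscreteTopology Unit := ⟨rfl⟩
      exact Continuous.isClosedEmbedding (continuous_pi fun _ => continuous_const)
        (fun a b _ => (hC ⟨a⟩).elim) |>.isEmbedding
    · letI : TopologicalSpace Unit := ⊥
      haveI : DiscreteTopology Unit := ⟨rfl⟩
      exact (Continuous.isClosedEmbedding (continuous_pi fun _ => continuous_const)
        (fun a b _ => (hC ⟨a⟩).elim)).isClosed_range
    · rintro u ⟨χ, -⟩ n; exact (hC ⟨χ⟩).elim
    · intro χ; exact (hC ⟨χ⟩).elim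
  -- main case
  -- clopen sets of small diameter covering C
  have hW : ∀ x : C, ∃ V : Set C, IsClopen V ∧ x ∈ V ∧ V ⊆ Metric.ball x (ε / 3) := by
    intro x
    exact compact_exists_isClopen_in_isOpen Metric.isOpen_ball
      (Metric.mem_ball_self (by linarith))
  choose W hWclopen hWmem hWball using hW
  obtain ⟨t, ht⟩ := isCompact_univ.elim_finite_subcover W (fun x => (hWclopen x).2)
    (fun x _ => Set.mem_iUnion.2 ⟨x, hWmem x⟩)
  set N := t.card with hN
  have e := t.equivFin
  set V : Fin N → Set C := fun i => W (e.symm i) with hV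
  have hVclopen : ∀ i, IsClopen (V i) := fun i => hWclopen _
  have hVsmall : ∀ i x y, x ∈ V i → y ∈ V i → dist x y < ε := by
    intro i x y hx hy
    have hx' := hWball _ hx
    have hy' := hWball _ hy
    rw [Metric.mem_ball] at hx' hy'
    calc dist x y ≤ dist x (e.symm i : C) + dist (e.symm i : C) y := dist_triangle _ _ _
      _ < ε / 3 + ε / 3 := by rw [dist_comm (e.symm i : C) y]; exact add_lt_add hx' hy'
      _ < ε := by linarith
  have hVcover : ∀ x : C, ∃ i, x ∈ V i := by
    intro x
    obtain ⟨y, hy, hxy⟩ := Set.mem_iUnion₂.1 (ht (Set.mem_univ x))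
    exact ⟨e ⟨y, hy⟩, by simpa [hV, Equiv.symm_apply_apply] using hxy⟩
  -- the labeling function
  have hSne : ∀ x : C, (Finset.univ.filter (fun i => x ∈ V i)).Nonempty := by
    intro x
    obtain ⟨i, hi⟩ := hVcover x
    exact ⟨i, Finset.mem_filter.2 ⟨Finset.mem_univ _, hi⟩⟩
  set f : C → Fin N := fun x => (Finset.univ.filter (fun i => x ∈ V i)).min' (hSne x)
    with hf
  have hfmem : ∀ x, x ∈ V (f x) := by
    intro x
    have := (Finset.univ.filter (fun i => x ∈ V i)).min'_mem (hSne x)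
    exact (Finset.mem_filter.1 this).2
  have hfeq : ∀ x i, f x = i ↔ x ∈ V i ∧ ∀ j, j < i → x ∉ V j := by
    intro x i
    constructor
    · rintro rfl
      refine ⟨hfmem x, fun j hj hxj => ?_⟩
      have := Finset.min'_le (Finset.univ.filter (fun i => x ∈ V i)) j (by simp [hxj])
      exact absurd this (not_le.2 hj)
    · rintro ⟨hxi, hmin⟩
      have h1 : f x ≤ i := Finset.min'_le (Finset.univ.filter (fun i => x ∈ V i)) i (by simp [hxi])
      rcases lt_or_eq_of_le h1 with h | h
      · exact absurd (hfmem x) (hmin _ h)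
      · exact h
  -- distinguish distant points
  have hfsep : ∀ x y : C, ε ≤ dist x y → f x ≠ f y := by
    intro x y hxy hfxy
    have := hVsmall (f x) x y (hfmem x) (hfxy ▸ hfmem y)
    linarith
  letI : TopologicalSpace (Fin N) := ⊥
  haveI : DiscreteTopology (Fin N) := ⟨rfl⟩
  have hfcont : Continuous f := by
    rw [continuous_discrete_rng]
    intro i
    have : f ⁻¹' {i} = V i ∩ ⋂ (j : Fin N), ⋂ (_ : j < i), (V j)ᶜ := by
      ext x
      simp only [Set.mem_preimage, Set.mem_singleton_iff, Set.mem_inter_iff, Set.mem_iInter,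
        Set.mem_compl_iff, hfeq]
    rw [this]
    exact ((hVclopen i).2.inter (isOpen_iInter_of_finite fun j =>
      isOpen_iInter_of_finite fun _ => (hVclopen j).1.isOpen_compl))
  -- nonempty alphabet
  obtain ⟨x₀⟩ := hC
  haveI : Nonempty (Fin N) := ⟨f x₀⟩
  have hinj : Function.Injective (fun χ (m : Fin k → ℤ) => f (φ m χ)) := by
    intro χ ρ hχρ
    by_contra hne
    obtain ⟨n, hn⟩ := hε χ ρ hne
    exact hfsep _ _ hn (congrFun hχρ n)
  have hhcont : Continuous (fun χ (m : Fin k → ℤ) => f (φ m χ)) :=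
    continuous_pi fun m => hfcont.comp (hcont m)
  have hclemb := hhcont.isClosedEmbedding hinj
  have hequi : ∀ χ n, (fun (m : Fin k → ℤ) => f (φ m (φ n χ))) = fun m => f (φ (m + n) χ) := by
    intro χ n
    funext m
    rw [hcomp m n]
    rfl
  refine ⟨Fin N, inferInstance, inferInstance, fun χ m => f (φ m χ),
    hclemb.isEmbedding, hclemb.isClosed_range, ?_, hequi⟩
  rintro u ⟨χ, rfl⟩ n
  exact ⟨φ n χ, by simpa using hequi χ n⟩
end
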